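/- Consider the system dξ/dτ = θ(1 + ξ²), dθ/dτ = 1 + ξ² − θ² + ξθ², and let F(ξ,θ) = ((1 + ξ²)/(θ² − ξ² − 1))·exp(−2·arctan ξ) on the set G = {(ξ,θ) : θ² − ξ² ≠ 1}. Then F is differentiable on G and θ(1 + ξ²)·∂F/∂ξ(ξ,θ) + (1 + ξ² − θ² + ξθ²)·∂F/∂θ(ξ,θ) = 0 for all (ξ,θ) ∈ G; that is, F is a general autonomous integral of the system on any domain contained in G. -/

import Mathlib

/-! Write `F = w(ξ)/v(ξ,θ)` with `w(ξ) = (1 + ξ²)·exp(−2·arctan ξ)` and `v = θ² − ξ² − 1`.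
The exponential factor is chosen so that `w' = 2(ξ − 1)·exp(−2·arctan ξ)`: the derivative of
`−2·arctan ξ` cancels the factor `1 + ξ²`. With this, both partial derivatives of `F` are
`exp(−2·arctan ξ)/v²` times a polynomial, and the derivative of `F` along the vector field is
`2θ(1 + ξ²)·exp(−2·arctan ξ)/v²` times `(ξ − 1)·v + ξ(1 + ξ²) − (1 + ξ² − θ² + ξθ²)`,
which vanishes identically. -/

noncomputable def F8 : ℝ × ℝ → ℝ :=
  fun p => ((1 + p.1 ^ 2) / (p.2 ^ 2 - p.1 ^ 2 - 1)) *
    Real.exp (-2 * Real.arctan p.1)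

open Real

section PartialDerivatives

variable {𝕜 E F : Type*} [NontriviallyNormedField 𝕜] [NormedAddCommGroup E] [NormedSpace 𝕜 E]
  [NormedAddCommGroup F] [NormedSpace 𝕜 F]

theorem DifferentiableAt.fderiv_apply_one_zero {f : 𝕜 × E → F} {p : 𝕜 × E}
    (hf : DifferentiableAt 𝕜 f p) : fderiv 𝕜 f p (1, 0) = deriv (fun x => f (x, p.2)) p.1 := by
  have hline : HasDerivAt (fun x : 𝕜 => (x, p.2)) (1, 0) p.1 :=
    (hasDerivAt_id p.1).prodMk (hasDerivAt_const p.1 p.2)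
  exact ((hf.hasFDerivAt.comp_hasDerivAt p.1 hline).deriv).symm

theorem DifferentiableAt.fderiv_apply_zero_one {f : E × 𝕜 → F} {p : E × 𝕜}
    (hf : DifferentiableAt 𝕜 f p) : fderiv 𝕜 f p (0, 1) = deriv (fun y => f (p.1, y)) p.2 := by
  have hline : HasDerivAt (fun y : 𝕜 => (p.1, y)) (0, 1) p.2 :=
    (hasDerivAt_const p.2 p.1).prodMk (hasDerivAt_id p.2)
  exact ((hf.hasFDerivAt.comp_hasDerivAt p.2 hline).deriv).symm

end PartialDerivatives

theorem hasDerivAt_one_add_sq_mul_exp_neg_two_mul_arctan (x : ℝ) :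
    HasDerivAt (fun x => (1 + x ^ 2) * exp (-2 * arctan x))
      (2 * (x - 1) * exp (-2 * arctan x)) x := by
  have hu : HasDerivAt (fun x : ℝ => 1 + x ^ 2) (2 * x) x := by
    simpa using (hasDerivAt_pow 2 x).const_add 1
  have he := ((hasDerivAt_arctan x).const_mul (-2)).exp
  refine (hu.mul he).congr_deriv ?_
  have hu0 : (1 : ℝ) + x ^ 2 ≠ 0 := by positivity
  field_simp
  ring

theorem F8_apply (p : ℝ × ℝ) :
    F8 p = (1 + p.1 ^ 2) * exp (-2 * arctan p.1) / (p.2 ^ 2 - p.1 ^ 2 - 1) := by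
  simp only [F8]; ring

theorem hasDerivAt_F8_fst {x y : ℝ} (h : y ^ 2 - x ^ 2 - 1 ≠ 0) :
    HasDerivAt (fun x => F8 (x, y))
      (2 * exp (-2 * arctan x) * ((x - 1) * (y ^ 2 - x ^ 2 - 1) + x * (1 + x ^ 2)) /
        (y ^ 2 - x ^ 2 - 1) ^ 2) x := by
  have hv : HasDerivAt (fun x : ℝ => y ^ 2 - x ^ 2 - 1) (-(2 * x)) x := by
    simpa using ((hasDerivAt_pow 2 x).const_sub (y ^ 2)).sub_const 1
  simp only [F8_apply]
  refine ((hasDerivAt_one_add_sq_mul_exp_neg_two_mul_arctan x).div hv h).congr_deriv ?_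
  ring

theorem hasDerivAt_F8_snd {x y : ℝ} (h : y ^ 2 - x ^ 2 - 1 ≠ 0) :
    HasDerivAt (fun y => F8 (x, y))
      (-(2 * y * (1 + x ^ 2) * exp (-2 * arctan x)) / (y ^ 2 - x ^ 2 - 1) ^ 2) y := by
  have hv : HasDerivAt (fun y : ℝ => y ^ 2 - x ^ 2 - 1) (2 * y) y := by
    simpa using ((hasDerivAt_pow 2 y).sub_const (x ^ 2)).sub_const 1
  simp only [F8_apply]
  refine ((hasDerivAt_const y ((1 + x ^ 2) * exp (-2 * arctan x))).div hv h).congr_deriv ?_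
  ring

theorem differentiableAt_F8 {p : ℝ × ℝ} (h : p.2 ^ 2 - p.1 ^ 2 - 1 ≠ 0) :
    DifferentiableAt ℝ F8 p := by
  have harctan : DifferentiableAt ℝ (fun q : ℝ × ℝ => arctan q.1) p :=
    differentiableAt_fst.arctan
  unfold F8
  fun_prop (disch := exact h)

/-- `F` is a general autonomous integral of the system
`dξ/dτ = θ(1 + ξ²)`, `dθ/dτ = 1 + ξ² − θ² + ξθ²` on
`G = {(ξ,θ) : θ² − ξ² ≠ 1}`. -/
theorem F8_general_autonomous_integral :
    ∀ p : ℝ × ℝ, p.2 ^ 2 - p.1 ^ 2 ≠ 1 →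
      DifferentiableAt ℝ F8 p ∧
      p.2 * (1 + p.1 ^ 2) * fderiv ℝ F8 p (1, 0) +
        (1 + p.1 ^ 2 - p.2 ^ 2 + p.1 * p.2 ^ 2) * fderiv ℝ F8 p (0, 1) = 0 := by
  rintro ⟨x, y⟩ hp
  have hv : y ^ 2 - x ^ 2 - 1 ≠ 0 := sub_ne_zero.mpr hp
  have hF := differentiableAt_F8 (p := (x, y)) hv
  refine ⟨hF, ?_⟩
  rw [hF.fderiv_apply_one_zero, hF.fderiv_apply_zero_one, (hasDerivAt_F8_fst hv).deriv,
    (hasDerivAt_F8_snd hv).deriv]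
  field_simp
  ring
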